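/- Let γ be gamma-distributed with integer shape m ≥ 2 and scale θ > 0. Then E[log₂(1+γ)] ≥ log₂(1 + (m−1)θ). -/

import Mathlib

open MeasureTheory ProbabilityTheory

lemma efas_aux_gammaPDFReal_step {a r x : ℝ} (ha : 0 < a) (hr : 0 < r) (hx : 0 < x) :
    gammaPDFReal (a + 1) r x = (r / a) * x * gammaPDFReal a r x := by
  have hG : Real.Gamma (a + 1) = a * Real.Gamma a := Real.Gamma_add_one ha.ne'
  have hrp : r ^ (a + 1) = r ^ a * r := Real.rpow_add_one hr.ne' a
  have hxp : x ^ (a + 1 - 1) = x ^ (a - 1) * x := by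
    have h := Real.rpow_add_one hx.ne' (a - 1)
    rw [sub_add_cancel] at h
    rw [show a + 1 - 1 = a by ring, h]
  have hGpos : 0 < Real.Gamma a := Real.Gamma_pos_of_pos ha
  simp only [gammaPDFReal, if_pos hx.le, hG, hrp, hxp]
  field_simp

/-- Let `γ` be gamma-distributed with integer shape `m` and scale `θ > 0`
(rate `1/θ`). For `m ≥ 2`, since `Gamma(m, θ)` stochastically dominates
`Gamma(m−1, θ)`, the per-user ZF rate is lower-bounded as
`E[log₂(1+γ)] ≥ log₂(1 + (m−1)θ)`. -/
theorem efas_gamma_rate_lower_bound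
    {Ωs : Type*} [MeasurableSpace Ωs] (μ : Measure Ωs) [IsProbabilityMeasure μ]
    (m : ℕ) (hm : 2 ≤ m) (θ : ℝ) (hθ : 0 < θ)
    (γ : Ωs → ℝ) (hmeas : Measurable γ)
    (hlaw : Measure.map γ μ = gammaMeasure (m : ℝ) (1 / θ)) :
    Real.logb 2 (1 + ((m : ℝ) - 1) * θ) ≤ ∫ ω, Real.logb 2 (1 + γ ω) ∂μ := by
  have hr : (0:ℝ) < 1 / θ := by positivity
  set r : ℝ := 1 / θ with hrdef
  set c : ℝ := ((m : ℝ) - 1) * θ with hcdef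
  have hm2 : (2:ℝ) ≤ (m:ℝ) := by exact_mod_cast hm
  have hM : (1:ℝ) ≤ (m:ℝ) - 1 := by linarith
  have hMpos : (0:ℝ) < (m:ℝ) - 1 := by linarith
  have hmpos : (0:ℝ) < (m:ℝ) := by linarith
  have hc : 0 < c := mul_pos hMpos hθ
  have h1c : (0:ℝ) < 1 + c := by linarith
  have hrM : r / ((m:ℝ) - 1) = 1 / c := by
    rw [hcdef, hrdef]; field_simp
  set ν : Measure ℝ := gammaMeasure (m : ℝ) r with hν
  have hprob : IsProbabilityMeasure ν := isProbabilityMeasure_gammaMeasure hmpos hr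
  -- measurability helpers
  have hmeasLogb : Measurable fun x : ℝ => Real.logb 2 (1 + x) := by
    unfold Real.logb
    exact (Real.measurable_log.comp (measurable_id.const_add 1)).div_const _
  have hmeasLog : Measurable fun x : ℝ => Real.log (1 + x) :=
    Real.measurable_log.comp (measurable_id.const_add 1)
  have hmeasInv : Measurable fun x : ℝ => (1 + x)⁻¹ :=
    (measurable_id.const_add 1).inv
  have hmeasPDF : ∀ a : ℝ, Measurable (gammaPDF a r) := fun a =>
    (measurable_gammaPDFReal a r).ennreal_ofReal
  -- transfer to ν
  have htrans : ∫ ω, Real.logb 2 (1 + γ ω) ∂μ = ∫ x, Real.logb 2 (1 + x) ∂ν := by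
    rw [← integral_map hmeas.aemeasurable hmeasLogb.aestronglyMeasurable, hlaw]
  rw [htrans]
  -- a.e. nonnegativity
  have hae0 : ∀ᵐ x ∂ν, 0 ≤ x := by
    rw [ae_iff]
    have hset : {x : ℝ | ¬ 0 ≤ x} = Set.Iio 0 := by ext x; simp [not_le]
    rw [hset, hν, gammaMeasure, withDensity_apply _ measurableSet_Iio]
    exact lintegral_gammaPDF_of_nonpos le_rfl
  -- Integrability of the identity
  have hIdInt : Integrable (fun x : ℝ => x) ν := by
    refine ⟨measurable_id.aestronglyMeasurable, ?_⟩
    rw [hasFiniteIntegral_iff_norm]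
    have hbound : ∀ x : ℝ, gammaPDF (m:ℝ) r x * ENNReal.ofReal ‖x‖
        ≤ ENNReal.ofReal ((m:ℝ) / r) * gammaPDF ((m:ℝ) + 1) r x := by
      intro x
      rcases lt_or_ge x 0 with hx | hx
      · simp only [gammaPDF_of_neg hx, zero_mul]
        exact zero_le
      · rcases eq_or_lt_of_le hx with hx0 | hx0
        · simp only [← hx0, norm_zero, ENNReal.ofReal_zero, mul_zero]
          exact zero_le
        · have hstep := efas_aux_gammaPDFReal_step hmpos hr hx0
          simp only [gammaPDF, Real.norm_eq_abs, abs_of_nonneg hx,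
            ← ENNReal.ofReal_mul (gammaPDFReal_nonneg hmpos hr x),
            ← ENNReal.ofReal_mul (show (0:ℝ) ≤ (m:ℝ)/r by positivity)]
          apply ENNReal.ofReal_le_ofReal
          rw [hstep]
          have heq : (m:ℝ)/r * (r/(m:ℝ) * x * gammaPDFReal (m:ℝ) r x)
              = gammaPDFReal (m:ℝ) r x * x := by
            field_simp
          rw [heq]
      
    calc ∫⁻ x, ENNReal.ofReal ‖x‖ ∂ν
        = ∫⁻ x, gammaPDF (m:ℝ) r x * ENNReal.ofReal ‖x‖ := by
          rw [hν, gammaMeasure,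
            lintegral_withDensity_eq_lintegral_mul volume (hmeasPDF _)
              measurable_norm.ennreal_ofReal]
          rfl
      _ ≤ ∫⁻ x, ENNReal.ofReal ((m:ℝ) / r) * gammaPDF ((m:ℝ) + 1) r x :=
          lintegral_mono hbound
      _ = ENNReal.ofReal ((m:ℝ) / r) * 1 := by
          rw [lintegral_const_mul _ (hmeasPDF _),
            lintegral_gammaPDF_eq_one (by positivity) hr]
      _ < ⊤ := by simp [ENNReal.ofReal_lt_top]
  -- Key estimate : ∫ (1+x)⁻¹ ≤ (1+c)⁻¹
  have hKey : ∫ x, (1 + x)⁻¹ ∂ν ≤ (1 + c)⁻¹ := by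
    have hnn : 0 ≤ᵐ[ν] fun x : ℝ => (1 + x)⁻¹ :=
      hae0.mono fun x hx => by positivity
    rw [integral_eq_lintegral_of_nonneg_ae hnn hmeasInv.aestronglyMeasurable]
    apply ENNReal.toReal_le_of_le_ofReal (by positivity)
    have hbound2 : ∀ x : ℝ, gammaPDF (m:ℝ) r x * ENNReal.ofReal (1 + x)⁻¹
        ≤ ENNReal.ofReal ((1+c)⁻¹ * (1+c)⁻¹)
          * (ENNReal.ofReal c * gammaPDF ((m:ℝ) - 1) r x + gammaPDF (m:ℝ) r x) := by
      intro x
      rcases lt_or_ge x 0 with hx | hx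
      · simp only [gammaPDF_of_neg hx, zero_mul]
        exact zero_le
      · have hy := gammaPDFReal_nonneg hMpos hr x
        have hpm := gammaPDFReal_nonneg hmpos hr x
        simp only [gammaPDF,
          ← ENNReal.ofReal_mul hpm, ← ENNReal.ofReal_mul hc.le,
          ← ENNReal.ofReal_add (mul_nonneg hc.le hy) hpm,
          ← ENNReal.ofReal_mul (show (0:ℝ) ≤ (1+c)⁻¹*(1+c)⁻¹ by positivity)]
        apply ENNReal.ofReal_le_ofReal
        rcases eq_or_lt_of_le hx with hx0 | hx0
        · have hz : gammaPDFReal (m:ℝ) r x = 0 := by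
            rw [← hx0]
            simp only [gammaPDFReal, if_pos le_rfl]
            rw [Real.zero_rpow (by linarith : (m:ℝ) - 1 ≠ 0)]
            ring
          rw [hz]
          have : (0:ℝ) ≤ (1+c)⁻¹*(1+c)⁻¹*(c * gammaPDFReal ((m:ℝ)-1) r x + 0) := by
            positivity
          simpa using this
        · have hstep := efas_aux_gammaPDFReal_step hMpos hr hx0
          rw [sub_add_cancel] at hstep
          rw [hstep, hrM]
          set y : ℝ := gammaPDFReal ((m:ℝ) - 1) r x with hydef
          have h1x : (0:ℝ) < 1 + x := by linarith
          rw [← sub_nonneg]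
          have expand : (1+c)⁻¹*(1+c)⁻¹*(c * y + 1/c * x * y) - 1/c * x * y * (1+x)⁻¹
              = (y * (x - c)^2) / (c * (1+x) * (1+c)^2) := by
            field_simp
            ring
          rw [expand]
          positivity
    calc ∫⁻ x, ENNReal.ofReal (1 + x)⁻¹ ∂ν
        = ∫⁻ x, gammaPDF (m:ℝ) r x * ENNReal.ofReal (1 + x)⁻¹ := by
          rw [hν, gammaMeasure,
            lintegral_withDensity_eq_lintegral_mul volume (hmeasPDF _)
              hmeasInv.ennreal_ofReal]
          rfl
      _ ≤ ∫⁻ x, ENNReal.ofReal ((1+c)⁻¹ * (1+c)⁻¹)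
            * (ENNReal.ofReal c * gammaPDF ((m:ℝ) - 1) r x + gammaPDF (m:ℝ) r x) :=
          lintegral_mono hbound2
      _ = ENNReal.ofReal ((1+c)⁻¹ * (1+c)⁻¹) * (ENNReal.ofReal c * 1 + 1) := by
          rw [lintegral_const_mul (f := fun x => ENNReal.ofReal c * gammaPDF ((m:ℝ) - 1) r x + gammaPDF (m:ℝ) r x) _ (((hmeasPDF _).const_mul _).add (hmeasPDF _)),
            lintegral_add_left ((hmeasPDF _).const_mul _),
            lintegral_const_mul _ (hmeasPDF _),
            lintegral_gammaPDF_eq_one hMpos hr, lintegral_gammaPDF_eq_one hmpos hr]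
      _ = ENNReal.ofReal ((1+c)⁻¹) := by
          rw [mul_one, ← ENNReal.ofReal_one, ← ENNReal.ofReal_add hc.le zero_le_one,
            ← ENNReal.ofReal_mul (by positivity)]
          congr 1
          rw [show c + 1 = 1 + c by ring, mul_assoc, inv_mul_cancel₀ h1c.ne', mul_one]
  -- integrability of (1+x)⁻¹ and log(1+x)
  have hIntInv : Integrable (fun x : ℝ => (1 + x)⁻¹) ν := by
    apply Integrable.mono (integrable_const (1:ℝ)) hmeasInv.aestronglyMeasurable
    filter_upwards [hae0] with x hx
    rw [Real.norm_eq_abs, norm_one, abs_of_nonneg (by positivity)]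
    exact inv_le_one_of_one_le₀ (by linarith)
  have hIntLog : Integrable (fun x : ℝ => Real.log (1 + x)) ν := by
    apply hIdInt.mono hmeasLog.aestronglyMeasurable
    filter_upwards [hae0] with x hx
    rw [Real.norm_eq_abs, Real.norm_eq_abs,
      abs_of_nonneg (Real.log_nonneg (by linarith)), abs_of_nonneg hx]
    have := Real.log_le_sub_one_of_pos (show (0:ℝ) < 1 + x by linarith)
    linarith
  -- pointwise tangent bound
  have hpt : (fun x : ℝ => Real.log (1+c) + 1 - (1+c) * (1+x)⁻¹)
      ≤ᵐ[ν] fun x : ℝ => Real.log (1 + x) := by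
    filter_upwards [hae0] with x hx
    have h1x : (0:ℝ) < 1 + x := by linarith
    have hlog := Real.log_le_sub_one_of_pos (div_pos h1c h1x)
    rw [Real.log_div h1c.ne' h1x.ne', div_eq_mul_inv] at hlog
    linarith
  have hIntG : Integrable (fun x : ℝ => Real.log (1+c) + 1 - (1+c) * (1+x)⁻¹) ν :=
    (integrable_const _).sub (hIntInv.const_mul _)
  have hmono := integral_mono_ae hIntG hIntLog hpt
  have hGval : ∫ x, (Real.log (1+c) + 1 - (1+c) * (1+x)⁻¹) ∂ν
      = Real.log (1+c) + 1 - (1+c) * ∫ x, (1+x)⁻¹ ∂ν := by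
    rw [integral_sub (integrable_const _) (hIntInv.const_mul _), integral_const,
      integral_const_mul]
    simp
  rw [hGval] at hmono
  have hb : (1+c) * ∫ x, (1+x)⁻¹ ∂ν ≤ 1 := by
    calc (1+c) * ∫ x, (1+x)⁻¹ ∂ν ≤ (1+c) * (1+c)⁻¹ :=
          mul_le_mul_of_nonneg_left hKey h1c.le
      _ = 1 := mul_inv_cancel₀ h1c.ne'
  have hfin : Real.log (1+c) ≤ ∫ x, Real.log (1+x) ∂ν := by linarith
  -- conclude for logb
  have hlog2 : (0:ℝ) < Real.log 2 := Real.log_pos one_lt_two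
  simp only [Real.logb]
  rw [integral_div]
  gcongr
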